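/- arXiv:2308.05529 — 3 statements merged into one kernel-verified Lean document; each statement's English description precedes it below -/
import Mathlib

section
/- Let F(z,w) = (e^{-z^2} - δw, z) with δ > 2 real. If (z₀, w₀) ∈ ℂ² satisfies |Im z₀| < |Re z₀|, |Im w₀| < |Re w₀|, and |Re w₀| > (1+λ)/(δ-1) for some λ > 0, then the first coordinate z₁ = e^{-z₀²} - δw₀ of F(z₀,w₀) satisfies |Re z₁| > |Re w₀| + λ. -/
/-!
The sector condition `|Im z₀| < |Re z₀|` makes `Re (-z₀²)` negative, so `|exp (-z₀²)| < 1`.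
Hence `Re z₁` lies within `1` of `-δ Re w₀`, and `(δ - 1) |Re w₀| > 1 + λ` absorbs that error.
-/

open Complex

theorem norm_exp_neg_sq_lt_one {z : ℂ} (hz : |z.im| < |z.re|) : ‖exp (-z ^ 2)‖ < 1 := by
  have hsq : z.im ^ 2 < z.re ^ 2 := sq_lt_sq.mpr hz
  have hre : (-z ^ 2).re = z.im ^ 2 - z.re ^ 2 := by
    simp only [neg_re, sq, mul_re]
    ring
  rw [norm_exp, Real.exp_lt_one_iff, hre]
  linarith

theorem add_lt_abs_sub_mul {a x δ c : ℝ} (ha : |a| < 1) (hδ : 0 ≤ δ)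
    (hx : 1 + c < (δ - 1) * |x|) : |x| + c < |a - δ * x| :=
  calc |x| + c < δ * |x| - 1 := by linarith
    _ < |δ * x| - |a| := by rw [abs_mul, abs_of_nonneg hδ]; linarith
    _ ≤ |a - δ * x| := by rw [abs_sub_comm]; exact abs_sub_abs_le_abs_sub _ _

theorem stmt_3_general (δ lam : ℝ) (hδ : 2 < δ) (z₀ w₀ : ℂ)
    (hz : |z₀.im| < |z₀.re|)
    (hre : |w₀.re| > (1 + lam) / (δ - 1)) :
    |(Complex.exp (-z₀ ^ 2) - (δ : ℂ) * w₀).re| > |w₀.re| + lam := by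
  have hexp : |(exp (-z₀ ^ 2)).re| < 1 :=
    (abs_re_le_norm _).trans_lt (norm_exp_neg_sq_lt_one hz)
  have hw : 1 + lam < (δ - 1) * |w₀.re| := by
    rwa [gt_iff_lt, div_lt_iff₀' (by linarith)] at hre
  rw [sub_re, re_ofReal_mul]
  exact add_lt_abs_sub_mul hexp (by linarith) hw

theorem stmt_3 (δ lam : ℝ) (hδ : 2 < δ) (hlam : 0 < lam) (z₀ w₀ : ℂ)
    (hz : |z₀.im| < |z₀.re|) (hw : |w₀.im| < |w₀.re|)
    (hre : |w₀.re| > (1 + lam) / (δ - 1)) :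
    |(Complex.exp (-z₀ ^ 2) - (δ : ℂ) * w₀).re| > |w₀.re| + lam :=
  stmt_3_general δ lam hδ z₀ w₀ hz hre
end

section
/- Let F(z,w) = (e^{-z^2} - δw, z) with δ > 2. If (z₀, w₀) satisfies |Im z₀| < |Re z₀|, |Im w₀| < |Re w₀|, and |Re w₀| > 1/δ, then Re z₁ = Re(e^{-z₀²} - δw₀) has sign opposite to the sign of Re w₀. -/
/-!
If `|Im z| < |Re z|` then `Re (z²) = (Re z)² - (Im z)² > 0`, so `|exp (-z²)| < 1` and in particular
`|Re (exp (-z²))| < 1`. Since `Re (exp (-z²) - δ w) = Re (exp (-z²)) - δ Re w` and `|δ Re w| > 1`,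
the second term decides the sign.
-/

namespace Complex

lemma re_sq_pos_of_abs_im_lt_abs_re {z : ℂ} (hz : |z.im| < |z.re|) : 0 < (z ^ 2).re := by
  have h : z.im ^ 2 < z.re ^ 2 := sq_lt_sq.mpr hz
  rw [sq z, mul_re]
  nlinarith

lemma norm_exp_neg_sq_lt_one {z : ℂ} (hz : |z.im| < |z.re|) : ‖exp (-z ^ 2)‖ < 1 := by
  rw [norm_exp, Real.exp_lt_one_iff, neg_re, neg_lt_zero]
  exact re_sq_pos_of_abs_im_lt_abs_re hz

lemma abs_re_exp_neg_sq_lt_one {z : ℂ} (hz : |z.im| < |z.re|) : |(exp (-z ^ 2)).re| < 1 :=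
  (abs_re_le_norm _).trans_lt (norm_exp_neg_sq_lt_one hz)

lemma re_sub_ofReal_mul_neg {u w : ℂ} {δ : ℝ} (hδ : 0 < δ) (hu : u.re < 1) (hw : 1 / δ < w.re) :
    (u - δ * w).re < 0 := by
  have : 1 < δ * w.re := by rwa [div_lt_iff₀' hδ] at hw
  rw [sub_re, re_ofReal_mul]
  linarith

lemma re_sub_ofReal_mul_pos {u w : ℂ} {δ : ℝ} (hδ : 0 < δ) (hu : -1 < u.re)
    (hw : w.re < -(1 / δ)) : 0 < (u - δ * w).re := by
  have : 1 < δ * -w.re := by rwa [lt_neg, div_lt_iff₀' hδ] at hw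
  rw [sub_re, re_ofReal_mul]
  linarith

end Complex

theorem stmt_4_general (δ : ℝ) (hδ : 2 < δ) (z₀ w₀ : ℂ)
    (hz : |z₀.im| < |z₀.re|) :
    (w₀.re > 1 / δ → (Complex.exp (-z₀ ^ 2) - (δ : ℂ) * w₀).re < 0) ∧
      (w₀.re < -(1 / δ) → (Complex.exp (-z₀ ^ 2) - (δ : ℂ) * w₀).re > 0) := by
  have hδ₀ : 0 < δ := by linarith
  obtain ⟨hlow, hupp⟩ := abs_lt.mp (Complex.abs_re_exp_neg_sq_lt_one hz)
  exact ⟨Complex.re_sub_ofReal_mul_neg hδ₀ hupp, Complex.re_sub_ofReal_mul_pos hδ₀ hlow⟩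

theorem stmt_4 (δ : ℝ) (hδ : 2 < δ) (z₀ w₀ : ℂ)
    (hz : |z₀.im| < |z₀.re|) (hw : |w₀.im| < |w₀.re|) :
    (w₀.re > 1 / δ → (Complex.exp (-z₀ ^ 2) - (δ : ℂ) * w₀).re < 0) ∧
      (w₀.re < -(1 / δ) → (Complex.exp (-z₀ ^ 2) - (δ : ℂ) * w₀).re > 0) :=
  stmt_4_general δ hδ z₀ w₀ hz
end

section
/- Let 0 < k < k̃ < 1, δ > 2, and let (z₀, w₀) ∈ ℂ² satisfy |Im z₀| < |Re z₀|, |Im w₀| ≤ k|Re w₀|, and |Re w₀| > 2/(δ(k̃ - k)). Then z₁ = e^{-z₀²} - δw₀ satisfies |Im z₁ / Re z₁| < k̃ (in particular Re z₁ ≠ 0). -/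
/-! For `|Im z₀| < |Re z₀|` the real part of `-z₀²` is negative, so `e^{-z₀²}` lies in the closed
unit disc. Writing `v = δ w₀`, the point `v` lies in the cone `|Im| ≤ k |Re|` and is so far out
(`(k̃ - k) |Re v| > 2`) that a perturbation of size at most `1` moves it only into the wider cone
`|Im| < k̃ |Re|`. -/

theorem Complex.norm_exp_neg_sq_le_one {z : ℂ} (hz : |z.im| ≤ |z.re|) :
    ‖Complex.exp (-z ^ 2)‖ ≤ 1 := by
  have hsq : z.im ^ 2 ≤ z.re ^ 2 := sq_le_sq.mpr hz
  rw [Complex.norm_exp, Real.exp_le_one_iff]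
  simp only [Complex.neg_re, pow_two, Complex.mul_re] at hsq ⊢
  linarith

theorem abs_im_sub_lt_mul_abs_re_sub {k k' : ℝ} {c v : ℂ} (hc : ‖c‖ ≤ 1) (hk' : k' < 1)
    (hv : |v.im| ≤ k * |v.re|) (hre : 2 < (k' - k) * |v.re|) :
    |(c - v).im| < k' * |(c - v).re| := by
  have hcre : |c.re| ≤ 1 := (Complex.abs_re_le_norm c).trans hc
  have hcim : |c.im| ≤ 1 := (Complex.abs_im_le_norm c).trans hc
  have hvre : 0 < |v.re| := by
    refine (abs_nonneg _).lt_of_ne fun h ↦ ?_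
    rw [← h, mul_zero] at hre
    norm_num at hre
  have hk : 0 ≤ k := nonneg_of_mul_nonneg_left ((abs_nonneg _).trans hv) hvre
  have hk'0 : 0 ≤ k' := by nlinarith
  have hre_ge : |v.re| - 1 ≤ |(c - v).re| := by
    have := abs_sub_abs_le_abs_sub v.re c.re
    rw [Complex.sub_re, abs_sub_comm]
    linarith
  have him_le : |(c - v).im| ≤ 1 + k * |v.re| := by
    rw [Complex.sub_im]
    linarith [abs_sub c.im v.im]
  calc |(c - v).im| ≤ 1 + k * |v.re| := him_le
    _ < k' * (|v.re| - 1) := by linarith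
    _ ≤ k' * |(c - v).re| := by gcongr

theorem abs_div_lt_of_abs_lt_mul_abs {a b k : ℝ} (h : |a| < k * |b|) : b ≠ 0 ∧ |a / b| < k := by
  have hb : b ≠ 0 := by
    rintro rfl
    simp only [abs_zero, mul_zero] at h
    exact (abs_nonneg a).not_gt h
  refine ⟨hb, ?_⟩
  rwa [abs_div, div_lt_iff₀ (abs_pos.mpr hb)]

theorem stmt_5_general (k k' δ : ℝ) (hkk' : k < k') (hk' : k' < 1) (hδ : 2 < δ)
    (z₀ w₀ : ℂ) (hz : |z₀.im| < |z₀.re|) (hw : |w₀.im| ≤ k * |w₀.re|)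
    (hre : |w₀.re| > 2 / (δ * (k' - k))) :
    (Complex.exp (-z₀ ^ 2) - (δ : ℂ) * w₀).re ≠ 0 ∧
      |(Complex.exp (-z₀ ^ 2) - (δ : ℂ) * w₀).im /
          (Complex.exp (-z₀ ^ 2) - (δ : ℂ) * w₀).re| < k' := by
  have hδ0 : 0 < δ := by linarith
  rw [gt_iff_lt, div_lt_iff₀ (mul_pos hδ0 (sub_pos.mpr hkk'))] at hre
  apply abs_div_lt_of_abs_lt_mul_abs
  apply abs_im_sub_lt_mul_abs_re_sub (k := k) (Complex.norm_exp_neg_sq_le_one hz.le) hk'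
  · simp only [Complex.re_ofReal_mul, Complex.im_ofReal_mul, abs_mul, abs_of_pos hδ0]
    nlinarith
  · simp only [Complex.re_ofReal_mul, abs_mul, abs_of_pos hδ0]
    linarith

theorem stmt_5 (k k' δ : ℝ) (hk : 0 < k) (hkk' : k < k') (hk' : k' < 1) (hδ : 2 < δ)
    (z₀ w₀ : ℂ) (hz : |z₀.im| < |z₀.re|) (hw : |w₀.im| ≤ k * |w₀.re|)
    (hre : |w₀.re| > 2 / (δ * (k' - k))) :
    (Complex.exp (-z₀ ^ 2) - (δ : ℂ) * w₀).re ≠ 0 ∧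
      |(Complex.exp (-z₀ ^ 2) - (δ : ℂ) * w₀).im /
          (Complex.exp (-z₀ ^ 2) - (δ : ℂ) * w₀).re| < k' :=
  stmt_5_general k k' δ hkk' hk' hδ z₀ w₀ hz hw hre
end
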